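/- arXiv:2104.07593 — 2 statements merged into one kernel-verified Lean document; each statement's English description precedes it below -/
import Mathlib

section
/- Let X be a complete metric space and let (γₙ) be a sequence of Lipschitz curves γₙ : [0,1] → X with uniformly bounded Lipschitz constants L = supₙ Lip(γₙ) < ∞. Suppose that for every ε > 0 there exists a compact set K ⊆ X such that the Lebesgue measure of {t ∈ [0,1] : γₙ(t) ∉ K} is at most ε for every n. Then there exists a subsequence (γ_{n_i}) converging uniformly on [0,1] to some Lipschitz curve γ : [0,1] → X. -/
open MeasureTheory Filter Set
open scoped BoundedContinuousFunction

/-! A set of measure `< δ` cannot contain an interval of length `δ`, so each point of `[0,1]` is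
within `δ` of a time at which `γₙ` lies in the compact set `K`; by the Lipschitz bound, all the
curves stay within `Lδ` of `K`. Hence the union of their images is totally bounded, its closure is
compact since `X` is complete, and the classical Arzelà–Ascoli theorem applies to the
equi-Lipschitz family; the Lipschitz bound passes to the uniform limit. -/

theorem exists_mem_Icc_dist_le_notMem_of_volume_lt {a b t δ : ℝ} {E : Set ℝ}
    (ht : t ∈ Icc a b) (hδ : δ ≤ b - a) (hE : volume E < ENNReal.ofReal δ) :
    ∃ s ∈ Icc a b, dist s t ≤ δ ∧ s ∉ E := by
  have hδ0 : 0 < δ := ENNReal.ofReal_pos.mp (pos_of_gt hE)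
  set c := min t (b - δ)
  have hJ : Icc c (c + δ) ⊆ Icc a b :=
    Icc_subset_Icc (le_min ht.1 (by linarith)) (by linarith [min_le_right t (b - δ)])
  obtain ⟨s, hsJ, hsE⟩ := not_subset.mp fun hsub : Icc c (c + δ) ⊆ E => by
    simpa [Real.volume_Icc] using (measure_mono hsub).trans_lt hE
  refine ⟨s, hJ hsJ, ?_, hsE⟩
  have htJ : t ∈ Icc c (c + δ) := ⟨min_le_left _ _, by
    rcases min_cases t (b - δ) with h | h <;> linarith [ht.2]⟩
  rw [Real.dist_eq, abs_le]
  constructor <;> linarith [hsJ.1, hsJ.2, htJ.1, htJ.2]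

theorem LipschitzOnWith.image_Icc_subset_cthickening {X : Type*} [PseudoMetricSpace X]
    {f : ℝ → X} {L : NNReal} {a b δ : ℝ} (hf : LipschitzOnWith L f (Icc a b)) {K : Set X}
    (hδ : δ ≤ b - a) (hK : volume {t ∈ Icc a b | f t ∉ K} < ENNReal.ofReal δ) :
    f '' Icc a b ⊆ Metric.cthickening (L * δ) K := by
  rintro _ ⟨t, ht, rfl⟩
  obtain ⟨s, hs, hst, hsK⟩ := exists_mem_Icc_dist_le_notMem_of_volume_lt ht hδ hK
  refine Metric.mem_cthickening_of_dist_le _ (f s) _ K (not_not.mp fun h => hsK ⟨hs, h⟩) ?_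
  calc dist (f t) (f s) ≤ L * dist t s := hf.dist_le_mul t ht s hs
    _ ≤ L * δ := by rw [dist_comm]; gcongr

theorem Metric.totallyBounded_of_forall_subset_cthickening {X : Type*} [PseudoMetricSpace X]
    {s : Set X} (h : ∀ ε > 0, ∃ K, TotallyBounded K ∧ s ⊆ cthickening ε K) :
    TotallyBounded s := by
  refine totallyBounded_iff.mpr fun ε hε => ?_
  obtain ⟨K, hK, hsK⟩ := h (ε / 4) (by positivity)
  obtain ⟨t, ht, hKt⟩ := totallyBounded_iff.mp hK (ε / 2) (by positivity)
  refine ⟨t, ht, fun x hx => ?_⟩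
  obtain ⟨k, hk, hxk⟩ := mem_thickening_iff.mp <|
    cthickening_subset_thickening' (by positivity) (by linarith : ε / 4 < ε / 2) K (hsK hx)
  obtain ⟨y, hy, hky⟩ := mem_iUnion₂.mp (hKt hk)
  exact mem_iUnion₂.mpr ⟨y, hy, mem_ball.mpr <|
    (dist_triangle x k y).trans_lt (by linarith [mem_ball.mp hky])⟩

theorem LipschitzWith.exists_subseq_tendstoUniformly {α β : Type*} [PseudoMetricSpace α]
    [CompactSpace α] [MetricSpace β] {C : Set β} (hC : IsCompact C) {L : NNReal}
    {f : ℕ → α → β} (hf : ∀ n, LipschitzWith L (f n)) (hfC : ∀ n x, f n x ∈ C) :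
    ∃ φ : ℕ → ℕ, StrictMono φ ∧ ∃ g : α → β,
      LipschitzWith L g ∧ TendstoUniformly (fun i => f (φ i)) g atTop := by
  let F : ℕ → α →ᵇ β := fun n =>
    BoundedContinuousFunction.mkOfCompact ⟨f n, (hf n).continuous⟩
  have hequi : Equicontinuous ((↑) : range F → α → β) :=
    (LipschitzWith.uniformEquicontinuous _ L fun ⟨_, n, hn⟩ => hn ▸ hf n).equicontinuous
  have hcpt : IsCompact (closure (range F)) :=
    BoundedContinuousFunction.arzela_ascoli C hC _ (by rintro _ x ⟨n, rfl⟩; exact hfC n x) hequi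
  obtain ⟨G, -, φ, hφ, hlim⟩ := hcpt.tendsto_subseq fun n => subset_closure (mem_range_self n)
  have hunif : TendstoUniformly (fun i => f (φ i)) G atTop :=
    BoundedContinuousFunction.tendsto_iff_tendstoUniformly.mp hlim
  refine ⟨φ, hφ, G, ?_, hunif⟩
  exact (isClosed_setOfPred_lipschitzWith L).mem_of_tendsto
    (tendsto_pi_nhds.mpr hunif.tendsto_at) (Eventually.of_forall fun i => hf (φ i))

/-- Arzelà–Ascoli revisited: a sequence of uniformly Lipschitz curves `[0,1] → X`
whose values lie, up to a set of measure `≤ ε`, in a compact set, has a uniformly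
converging subsequence. -/
theorem arzela_ascoli_revisited
    {X : Type*} [MetricSpace X] [CompleteSpace X]
    (γ : ℕ → ℝ → X) (L : NNReal)
    (hLip : ∀ n, LipschitzOnWith L (γ n) (Set.Icc 0 1))
    (hK : ∀ ε : ℝ, 0 < ε → ∃ K : Set X, IsCompact K ∧
      ∀ n, volume {t ∈ Set.Icc (0:ℝ) 1 | γ n t ∉ K} ≤ ENNReal.ofReal ε) :
    ∃ φ : ℕ → ℕ, StrictMono φ ∧ ∃ g : ℝ → X,
      LipschitzOnWith L g (Set.Icc 0 1) ∧
      TendstoUniformlyOn (fun i => γ (φ i)) g atTop (Set.Icc 0 1) := by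
  set S := ⋃ n, γ n '' Icc 0 1
  have hS : TotallyBounded S := by
    refine Metric.totallyBounded_of_forall_subset_cthickening fun ε hε => ?_
    set δ := min 1 (ε / (L + 1))
    have hδ : 0 < δ := by positivity
    obtain ⟨K, hKc, hKγ⟩ := hK (δ / 2) (by positivity)
    refine ⟨K, hKc.totallyBounded, iUnion_subset fun n => ?_⟩
    refine ((hLip n).image_Icc_subset_cthickening (δ := δ)
      (by rw [sub_zero]; exact min_le_left _ _)
      ((hKγ n).trans_lt ((ENNReal.ofReal_lt_ofReal_iff hδ).mpr (half_lt_self hδ)))).trans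
      (Metric.cthickening_mono ?_ K)
    calc (L : ℝ) * δ ≤ (L + 1) * (ε / (L + 1)) :=
          mul_le_mul (by linarith) (min_le_right _ _) hδ.le (by positivity)
      _ = ε := by field_simp
  obtain ⟨φ, hφ, G, hGLip, hGlim⟩ := LipschitzWith.exists_subseq_tendstoUniformly
    (hS.closure.isCompact_of_isClosed isClosed_closure) (fun n => (hLip n).to_restrict)
    (fun n t => subset_closure (mem_iUnion_of_mem n (mem_image_of_mem (γ n) t.2)))
  have hG : IccExtend zero_le_one G ∘ ((↑) : Icc (0 : ℝ) 1 → ℝ) = G :=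
    funext (IccExtend_val zero_le_one G)
  refine ⟨φ, hφ, IccExtend zero_le_one G, ?_, ?_⟩
  · exact lipschitzOnWith_iff_restrict.mpr (by rw [← hG] at hGLip; exact hGLip)
  · rwa [tendstoUniformlyOn_iff_tendstoUniformly_comp_coe, hG]
end

section
/- Let (aₙ)ₙ be a non-increasing sequence of non-negative real numbers with ∑ₙ aₙ < ∞, and let m > 0 satisfy m ≤ ∑ₙ aₙ. Then there exist indices 1 ≤ n₁ < n₂ < ⋯ < n_p (possibly p = 1, and n_p possibly infinite) such that aₙ ≥ m for all n ≤ n₁, m/2 ≤ ∑_{n = n_j + 1}^{n_{j+1}} aₙ ≤ m for every j = 1, …, p−1, and ∑_{n > n_p} aₙ ≤ m/2. -/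
/-!
Let `c₀` be the last index with `a c₀ ≥ m`; every later term is `< m`. Cut greedily: from a cut `c`,
the next cut is the first `k` with `∑_{c < n ≤ k} aₙ ≥ m / 2`. Such a block has sum `≤ m`: either it
is a single term `< m`, or its last term is at most the previous one, which is itself at most the
block sum before the last term, `< m / 2`. Every block takes at least `m / 2` from the finite total,
so after finitely many cuts no further block reaches `m / 2`, and the remaining tail is `≤ m / 2`.
-/

open Finset

theorem tsum_subtype_Ioc_eq_sum (a : ℕ → ℝ) (c d : ℕ) :
    ∑' n : {n : ℕ // (c : ℕ∞) < n ∧ (n : ℕ∞) ≤ d}, a n = ∑ n ∈ Ioc c d, a n := by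
  rw [tsum_congr_subtype a (Q := (· ∈ Ioc c d)) (by simp), Finset.tsum_subtype]

theorem tsum_subtype_lt_le_of_sum_Ioc_le {a : ℕ → ℝ} (ha : ∀ n, 0 ≤ a n) {c : ℕ} {x : ℝ}
    (h : ∀ k, ∑ n ∈ Ioc c k, a n ≤ x) : ∑' n : {n : ℕ // (c : ℕ∞) < n}, a n ≤ x := by
  rw [tsum_congr_subtype a (Q := (· ∈ Set.Ioi c)) (by simp), _root_.tsum_subtype]
  refine Real.tsum_le_of_sum_range_le (Set.indicator_nonneg fun n _ => ha n) fun k => ?_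
  calc ∑ n ∈ range k, (Set.Ioi c).indicator a n = ∑ n ∈ range k with c < n, a n := by
        simp [sum_filter, Set.indicator_apply]
    _ ≤ ∑ n ∈ Ioc c k, a n :=
        sum_le_sum_of_subset_of_nonneg (fun n => by simp; omega) fun n _ _ => ha n
    _ ≤ x := h k

theorem Antitone.exists_forall_le_and_forall_lt {a : ℕ → ℝ} (hmono : Antitone a)
    (hlim : Filter.Tendsto a Filter.atTop (nhds 0)) {m : ℝ} (hm : 0 < m) :
    ∃ c, (∀ n, 1 ≤ n → n ≤ c → m ≤ a n) ∧ ∀ n, c < n → a n < m := by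
  classical
  have hex : ∃ c, ∀ n, c < n → a n < m := by
    obtain ⟨N, hN⟩ := Filter.eventually_atTop.1 (hlim.eventually (gt_mem_nhds hm))
    exact ⟨N, fun n hn => hN n hn.le⟩
  refine ⟨Nat.find hex, fun n hn hnc => ?_, Nat.find_spec hex⟩
  by_contra! han
  have : ¬ ∀ k, n - 1 < k → a k < m := Nat.find_min hex (by omega)
  exact this fun k hk => (hmono (by omega)).trans_lt han

namespace GreedyBlocks

variable {a : ℕ → ℝ} {m : ℝ}

def CanClose (a : ℕ → ℝ) (m : ℝ) (c : ℕ) : Prop := ∃ k, m / 2 ≤ ∑ n ∈ Ioc c k, a n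

open Classical in
noncomputable def nextCut (a : ℕ → ℝ) (m : ℝ) (c : ℕ) : ℕ :=
  if h : CanClose a m c then Nat.find h else c

theorem nextCut_spec {c : ℕ} (h : CanClose a m c) :
    m / 2 ≤ ∑ n ∈ Ioc c (nextCut a m c), a n ∧
      ∀ k < nextCut a m c, ∑ n ∈ Ioc c k, a n < m / 2 := by
  classical
  rw [nextCut, dif_pos h]
  exact ⟨Nat.find_spec h, fun k hk => not_le.1 (Nat.find_min h hk)⟩

theorem lt_nextCut (hm : 0 < m) {c : ℕ} (h : CanClose a m c) : c < nextCut a m c := by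
  by_contra! hc
  have := (nextCut_spec h).1
  rw [Ioc_eq_empty (by omega), sum_empty] at this
  linarith

theorem le_nextCut (hm : 0 < m) (c : ℕ) : c ≤ nextCut a m c := by
  by_cases h : CanClose a m c
  · exact (lt_nextCut hm h).le
  · rw [nextCut, dif_neg h]

theorem sum_Ioc_nextCut_le (hm : 0 < m) (ha : ∀ n, 0 ≤ a n) (hmono : Antitone a) {c : ℕ}
    (hsmall : ∀ n, c < n → a n < m) (h : CanClose a m c) :
    ∑ n ∈ Ioc c (nextCut a m c), a n ≤ m := by
  obtain ⟨k, hk⟩ : ∃ k, nextCut a m c = k + 1 :=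
    Nat.exists_eq_add_one_of_ne_zero (lt_nextCut hm h).ne_zero
  have hck : c ≤ k := by have := lt_nextCut hm h; omega
  have hhead : ∑ n ∈ Ioc c k, a n < m / 2 := (nextCut_spec h).2 k (by omega)
  rw [hk, sum_Ioc_succ_top hck]
  rcases hck.eq_or_lt with rfl | hck
  · simpa using (hsmall (c + 1) (by omega)).le
  · -- with at least two terms in the block, its last term is at most the sum of the others
    have hlast : a (k + 1) ≤ ∑ n ∈ Ioc c k, a n :=
      (hmono k.le_succ).trans (single_le_sum (fun n _ => ha n) (right_mem_Ioc.2 hck))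
    linarith

theorem mul_le_sum_Ioc_iterate_nextCut (hm : 0 < m) (c : ℕ) {J : ℕ}
    (h : ∀ i < J, CanClose a m ((nextCut a m)^[i] c)) :
    J * (m / 2) ≤ ∑ n ∈ Ioc c ((nextCut a m)^[J] c), a n := by
  induction J with
  | zero => simp
  | succ J ih =>
    have hcJ : c ≤ (nextCut a m)^[J] c := Function.id_le_iterate_of_id_le (le_nextCut hm) J c
    rw [Function.iterate_succ_apply', ← sum_Ioc_consecutive a hcJ (le_nextCut hm _)]
    push_cast
    linarith [ih fun i hi => h i (by omega), (nextCut_spec (h J J.lt_succ_self)).1]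

theorem exists_not_canClose_iterate_nextCut (hm : 0 < m) (ha : ∀ n, 0 ≤ a n)
    (hsum : Summable a) (c : ℕ) : ∃ J, ¬ CanClose a m ((nextCut a m)^[J] c) := by
  by_contra! h
  obtain ⟨J, hJ⟩ := exists_nat_gt ((∑' n, a n) / (m / 2))
  rw [div_lt_iff₀ (by positivity)] at hJ
  have := hsum.sum_le_tsum (Ioc c ((nextCut a m)^[J] c)) fun n _ => ha n
  linarith [mul_le_sum_Ioc_iterate_nextCut (J := J) hm c fun i _ => h i]

end GreedyBlocks

open GreedyBlocks in
theorem grouping_small_components_general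
    (a : ℕ → ℝ) (ha : ∀ n, 0 ≤ a n)
    (hmono : ∀ i j, i ≤ j → a j ≤ a i)
    (hsum : Summable a)
    (m : ℝ) (hm : 0 < m) :
    ∃ p : ℕ, 1 ≤ p ∧ ∃ c : ℕ → ℕ∞,
      (∀ j, 1 ≤ j → j < p → c j < c (j + 1)) ∧
      (∀ j, 1 ≤ j → j < p → c j ≠ ⊤) ∧
      (∀ n : ℕ, 1 ≤ n → (n : ℕ∞) ≤ c 1 → m ≤ a n) ∧
      (∀ j, 1 ≤ j → j < p →
        m / 2 ≤ (∑' n : {n : ℕ // c j < (n : ℕ∞) ∧ (n : ℕ∞) ≤ c (j + 1)}, a n) ∧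
        (∑' n : {n : ℕ // c j < (n : ℕ∞) ∧ (n : ℕ∞) ≤ c (j + 1)}, a n) ≤ m) ∧
      (∑' n : {n : ℕ // c p < (n : ℕ∞)}, a n) ≤ m / 2 := by
  classical
  obtain ⟨c₀, hhead, hsmall⟩ :=
    Antitone.exists_forall_le_and_forall_lt hmono hsum.tendsto_atTop_zero hm
  set cut : ℕ → ℕ := fun i => (nextCut a m)^[i] c₀
  have cut_succ (i : ℕ) : cut (i + 1) = nextCut a m (cut i) := Function.iterate_succ_apply' ..
  have small_after_cut (i n : ℕ) (hn : cut i < n) : a n < m :=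
    hsmall n ((Function.id_le_iterate_of_id_le (le_nextCut hm) i c₀).trans_lt hn)
  have hstop := exists_not_canClose_iterate_nextCut hm ha hsum c₀
  have hclose (i : ℕ) (hi : i < Nat.find hstop) : CanClose a m (cut i) :=
    not_not.1 (Nat.find_min hstop hi)
  refine ⟨Nat.find hstop + 1, by omega, fun j => (cut (j - 1) : ℕ∞), ?_,
    fun _ _ _ => ENat.natCast_ne_top _, fun n hn hnc => hhead n hn (Nat.cast_le.1 hnc), ?_, ?_⟩
  · rintro (_ | i) hj hi
    · omega
    simp only [Nat.add_sub_cancel, Nat.cast_lt, cut_succ]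
    exact lt_nextCut hm (hclose i (by omega))
  · rintro (_ | i) hj hi
    · omega
    simp only [Nat.add_sub_cancel, tsum_subtype_Ioc_eq_sum, cut_succ]
    exact ⟨(nextCut_spec (hclose i (by omega))).1,
      sum_Ioc_nextCut_le hm ha hmono (small_after_cut i) (hclose i (by omega))⟩
  · exact tsum_subtype_lt_le_of_sum_Ioc_le ha fun k =>
      (not_le.1 fun h => Nat.find_spec hstop ⟨k, h⟩).le

/-- Grouping the terms of a non-increasing non-negative summable sequence into blocks:
there are cut points `c 1 < c 2 < ⋯ < c p` (the last one possibly infinite) such that all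
terms with index `≤ c 1` are `≥ m`, each intermediate block has sum between `m/2` and `m`,
and the tail beyond `c p` has sum at most `m/2`. -/
theorem grouping_small_components
    (a : ℕ → ℝ) (ha : ∀ n, 0 ≤ a n)
    (hmono : ∀ i j, i ≤ j → a j ≤ a i)
    (hsum : Summable a)
    (m : ℝ) (hm : 0 < m) (hle : m ≤ ∑' n, a n) :
    ∃ p : ℕ, 1 ≤ p ∧ ∃ c : ℕ → ℕ∞,
      (∀ j, 1 ≤ j → j < p → c j < c (j + 1)) ∧
      (∀ j, 1 ≤ j → j < p → c j ≠ ⊤) ∧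
      (∀ n : ℕ, 1 ≤ n → (n : ℕ∞) ≤ c 1 → m ≤ a n) ∧
      (∀ j, 1 ≤ j → j < p →
        m / 2 ≤ (∑' n : {n : ℕ // c j < (n : ℕ∞) ∧ (n : ℕ∞) ≤ c (j + 1)}, a n) ∧
        (∑' n : {n : ℕ // c j < (n : ℕ∞) ∧ (n : ℕ∞) ≤ c (j + 1)}, a n) ≤ m) ∧
      (∑' n : {n : ℕ // c p < (n : ℕ∞)}, a n) ≤ m / 2 :=
  grouping_small_components_general a ha hmono hsum m hm
end
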